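/- In the space c of convergent real sequences with the supremum norm, the point e = (1, 1, 1, …) is not a denting point of the unit ball. -/

import Mathlib

/-!
A continuous functional `f` on `ℓ∞` is small on some unit vector `eₙ`: the sum of any `N`
unit vectors still has norm at most `1`, so `f (eₙ) ≥ η` for all `n` would force `N η ≤ ‖f‖`
for every `N`. Hence `e - 2 eₙ`, which lies in the unit ball of `c`, stays in any slice of the
ball containing `e`, while its distance to `e` is `2`.
-/

open Filter Topology BoundedContinuousFunction

section UnitVec

variable {ι : Type*} [TopologicalSpace ι] [DiscreteTopology ι] [DecidableEq ι]

noncomputable def unitVec (i : ι) : ι →ᵇ ℝ :=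
  ofNormedAddCommGroupDiscrete (Pi.single i 1) 1 fun j => by
    rcases eq_or_ne j i with rfl | h <;> simp [*]

theorem unitVec_apply (i j : ι) : unitVec i j = if j = i then 1 else 0 :=
  Pi.single_apply i 1 j

theorem norm_unitVec (i : ι) : ‖unitVec i‖ = 1 := by
  refine le_antisymm ((norm_le zero_le_one).2 fun j => ?_) ?_
  · rw [unitVec_apply]; split_ifs <;> simp
  · simpa [unitVec_apply] using norm_coe_le_norm (unitVec i) i

theorem norm_sum_unitVec_le (s : Finset ι) : ‖∑ i ∈ s, unitVec i‖ ≤ 1 := by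
  refine (norm_le zero_le_one).2 fun j => ?_
  simp only [coe_sum, Finset.sum_apply, unitVec_apply, Finset.sum_ite_eq]
  split_ifs <;> simp

theorem exists_apply_unitVec_lt [Infinite ι] (f : (ι →ᵇ ℝ) →L[ℝ] ℝ) {η : ℝ} (hη : 0 < η) :
    ∃ i, f (unitVec i) < η := by
  by_contra! hf
  obtain ⟨N, hN⟩ := exists_nat_gt (‖f‖ / η)
  obtain ⟨s, hs⟩ := Infinite.exists_subset_card_eq ι N
  have hlower : N * η ≤ f (∑ i ∈ s, unitVec i) := by
    rw [map_sum, ← hs, ← nsmul_eq_mul, ← Finset.sum_const]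
    exact Finset.sum_le_sum fun i _ => hf i
  have hupper : f (∑ i ∈ s, unitVec i) ≤ ‖f‖ :=
    calc f (∑ i ∈ s, unitVec i) ≤ ‖f‖ * ‖∑ i ∈ s, unitVec i‖ :=
          (le_abs_self _).trans (f.le_opNorm _)
      _ ≤ ‖f‖ := mul_le_of_le_one_right (norm_nonneg f) (norm_sum_unitVec_le s)
  rw [div_lt_iff₀ hη] at hN
  linarith

end UnitVec

def convergentUnitBall : Set (ℕ →ᵇ ℝ) :=
  {u | ‖u‖ ≤ 1 ∧ ∃ l : ℝ, Tendsto (⇑u) atTop (𝓝 l)}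

theorem const_one_sub_two_smul_unitVec_mem (n : ℕ) :
    const ℕ (1 : ℝ) - (2 : ℝ) • unitVec n ∈ convergentUnitBall := by
  have happly (m : ℕ) : (const ℕ (1 : ℝ) - (2 : ℝ) • unitVec n) m = if m = n then -1 else 1 := by
    simp only [BoundedContinuousFunction.sub_apply, BoundedContinuousFunction.smul_apply,
      const_apply, unitVec_apply, smul_eq_mul]
    split_ifs <;> norm_num
  refine ⟨(norm_le zero_le_one).2 fun m => ?_, 1, tendsto_const_nhds.congr' ?_⟩
  · rw [happly]; split_ifs <;> simp
  · filter_upwards [eventually_gt_atTop n] with m hm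
    rw [happly, if_neg hm.ne']

theorem stmt8 :
    ¬ (∀ ε > (0 : ℝ), ∃ (f : (ℕ →ᵇ ℝ) →L[ℝ] ℝ) (δ : ℝ), f ≠ 0 ∧ 0 < δ ∧
      BoundedContinuousFunction.const ℕ (1 : ℝ) ∈
        {y ∈ {u : ℕ →ᵇ ℝ | ‖u‖ ≤ 1 ∧ ∃ l : ℝ, Tendsto (⇑u) atTop (nhds l)} |
          sSup (f '' {u : ℕ →ᵇ ℝ | ‖u‖ ≤ 1 ∧ ∃ l : ℝ, Tendsto (⇑u) atTop (nhds l)}) - δ < f y} ∧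
      ∀ y ∈ {y ∈ {u : ℕ →ᵇ ℝ | ‖u‖ ≤ 1 ∧ ∃ l : ℝ, Tendsto (⇑u) atTop (nhds l)} |
          sSup (f '' {u : ℕ →ᵇ ℝ | ‖u‖ ≤ 1 ∧ ∃ l : ℝ, Tendsto (⇑u) atTop (nhds l)}) - δ < f y},
        ∀ z ∈ {y ∈ {u : ℕ →ᵇ ℝ | ‖u‖ ≤ 1 ∧ ∃ l : ℝ, Tendsto (⇑u) atTop (nhds l)} |
          sSup (f '' {u : ℕ →ᵇ ℝ | ‖u‖ ≤ 1 ∧ ∃ l : ℝ, Tendsto (⇑u) atTop (nhds l)}) - δ < f y},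
          ‖y - z‖ < ε) := by
  intro h
  obtain ⟨f, δ, -, -, ⟨he, hfe⟩, hdiam⟩ := h 1 one_pos
  set e := const ℕ (1 : ℝ)
  obtain ⟨n, hn⟩ := exists_apply_unitVec_lt f (half_pos (sub_pos.2 hfe))
  have hdist := hdiam e ⟨he, hfe⟩ (e - (2 : ℝ) • unitVec n)
    ⟨const_one_sub_two_smul_unitVec_mem n, by rw [map_sub, map_smul, smul_eq_mul]; linarith⟩
  rw [sub_sub_cancel, norm_smul, norm_unitVec] at hdist
  norm_num at hdist
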